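/- Let n, k, ℓ, r be as in the crypto family: r = ⌈(n+1)/(ℓ+2)⌉ + 2, t_i = (i+1)(r−2) − k + 2 and h_i = r − 1 + i for i = 1,...,ℓ, with parameter constraints guaranteeing 1 ≤ t_i ≤ n − k and 0 ≤ h_i < k. Let C ∈ F^{n,k}_ℓ be a corresponding twisted RS code. Then dim(C²) = n. -/

import Mathlib

open Polynomial

noncomputable def evalVec {F : Type*} [Field F] {n : ℕ} (α : Fin n → F) :
    F[X] →ₗ[F] (Fin n → F) :=
  LinearMap.pi fun i => Polynomial.leval (α i)

/-- The set of (t,h,η)-twisted polynomials: all `∑_{i<k} f_i Xⁱ + ∑_j η_j f_{h_j} X^{k-1+t_j}`. -/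
noncomputable def twistedSet {F : Type*} [Field F] (k ℓ : ℕ) (t h : Fin ℓ → ℕ)
    (η : Fin ℓ → F) : Set F[X] :=
  { g | ∃ f : ℕ → F,
      g = (∑ i ∈ Finset.range k, Polynomial.C (f i) * X ^ i)
        + ∑ j : Fin ℓ, Polynomial.C (η j * f (h j)) * X ^ (k - 1 + t j) }

/-- The twisted Reed–Solomon code: evaluation of the twisted polynomials at `α`. -/
noncomputable def twistedCode {F : Type*} [Field F] (n k ℓ : ℕ) (α : Fin n → F)
    (t h : Fin ℓ → ℕ) (η : Fin ℓ → F) : Submodule F (Fin n → F) :=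
  Submodule.span F (evalVec α '' twistedSet k ℓ t h η)

/-- The Schur product code: span of all componentwise products of codewords. -/
def schurCode {F : Type*} [Field F] {n : ℕ} (C₁ C₂ : Submodule F (Fin n → F)) :
    Submodule F (Fin n → F) :=
  Submodule.span F { z | ∃ c₁ ∈ C₁, ∃ c₂ ∈ C₂, z = fun i => c₁ i * c₂ i }

/-! The evaluations of the monomials `X ^ d`, `d < n`, span `F ^ n` because the evaluation points
are distinct (Vandermonde), so it suffices to find all of them in the Schur square. With
`m = r - 2`, the monomials `X ^ a`, `a ≤ m + 1`, are twisted polynomials, and their products give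
every degree `≤ 2m + 2`. The `j`-th twisted polynomial `X ^ h_j + η_j X ^ ((j + 2) m + 1)` times
`X ^ a` is `η_j X ^ ((j + 2) m + 1 + a)` modulo a monomial of lower degree, and since `η_j ≠ 0`
these products reach every degree up to `(ℓ + 2) m + 2 ≥ n - 1` by induction on the degree. -/

section

variable {F : Type*} [Field F]

lemma evalVec_mul {n : ℕ} (α : Fin n → F) (p q : F[X]) :
    evalVec α (p * q) = evalVec α p * evalVec α q :=
  funext fun _ => eval_mul

lemma evalVec_X_pow {n : ℕ} (α : Fin n → F) (d : ℕ) :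
    evalVec α (X ^ d) = fun i => α i ^ d :=
  funext fun i => Polynomial.eval_X_pow (x := α i) d

lemma mul_mem_schurCode {n : ℕ} {C₁ C₂ : Submodule F (Fin n → F)} {c₁ c₂ : Fin n → F}
    (h₁ : c₁ ∈ C₁) (h₂ : c₂ ∈ C₂) : c₁ * c₂ ∈ schurCode C₁ C₂ :=
  Submodule.subset_span ⟨c₁, h₁, c₂, h₂, rfl⟩

lemma evalVec_mem_twistedCode {n k ℓ : ℕ} (α : Fin n → F) {t h : Fin ℓ → ℕ} {η : Fin ℓ → F}
    {p : F[X]} (hp : p ∈ twistedSet k ℓ t h η) : evalVec α p ∈ twistedCode n k ℓ α t h η :=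
  Submodule.subset_span ⟨p, hp, rfl⟩

lemma evalVec_mul_mem_schurCode_twistedCode {n k ℓ : ℕ} (α : Fin n → F) {t h : Fin ℓ → ℕ}
    {η : Fin ℓ → F} {p q : F[X]} (hp : p ∈ twistedSet k ℓ t h η) (hq : q ∈ twistedSet k ℓ t h η) :
    evalVec α (p * q) ∈ schurCode (twistedCode n k ℓ α t h η) (twistedCode n k ℓ α t h η) := by
  rw [evalVec_mul]
  exact mul_mem_schurCode (evalVec_mem_twistedCode α hp) (evalVec_mem_twistedCode α hq)

section twistedSet

variable {k ℓ : ℕ} {t h : Fin ℓ → ℕ} {η : Fin ℓ → F}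

lemma X_pow_add_sum_mem_twistedSet {m : ℕ} (hm : m < k) :
    X ^ m + ∑ j with h j = m, C (η j) * X ^ (k - 1 + t j) ∈ twistedSet k ℓ t h η := by
  refine ⟨Pi.single m 1, ?_⟩
  simp only [Pi.single_apply, mul_ite, mul_one, mul_zero, apply_ite C, C_1, C_0, ite_mul,
    one_mul, zero_mul, Finset.sum_ite_eq', Finset.mem_range, if_pos hm, Finset.sum_filter]

lemma X_pow_mem_twistedSet {m : ℕ} (hm : m < k) (hmh : ∀ j, h j ≠ m) :
    (X ^ m : F[X]) ∈ twistedSet k ℓ t h η := by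
  simpa [hmh] using X_pow_add_sum_mem_twistedSet (t := t) (h := h) (η := η) hm

lemma X_pow_add_C_mul_X_pow_mem_twistedSet (hinj : Function.Injective h) {j : Fin ℓ}
    (hj : h j < k) : X ^ h j + C (η j) * X ^ (k - 1 + t j) ∈ twistedSet k ℓ t h η := by
  simpa [hinj.eq_iff, Finset.filter_eq'] using
    X_pow_add_sum_mem_twistedSet (t := t) (h := h) (η := η) hj

end twistedSet

lemma exists_eq_add_mul_add_one {ℓ m d : ℕ} (hlo : 2 * m + 2 < d) (hhi : d ≤ (ℓ + 2) * m + 2) :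
    ∃ j : Fin ℓ, ∃ a ≤ m + 1, d = (j + 2) * m + 1 + a := by
  induction ℓ with
  | zero => omega
  | succ ℓ ih =>
    by_cases hd : d ≤ (ℓ + 2) * m + 2
    · obtain ⟨j, a, ha, rfl⟩ := ih hd
      exact ⟨j.castSucc, a, ha, rfl⟩
    · have : (ℓ + 1 + 2) * m = (ℓ + 2) * m + m := by ring
      exact ⟨Fin.last ℓ, d - ((ℓ + 2) * m + 1), by omega, by simp only [Fin.val_last]; omega⟩

lemma X_pow_mem_of_mul_mem {P : Set F[X]} {Q : Submodule F F[X]} {ℓ m : ℕ}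
    (hmul : ∀ p ∈ P, ∀ q ∈ P, p * q ∈ Q) (hX : ∀ a ≤ m + 1, X ^ a ∈ P)
    (g : Fin ℓ → ℕ) (c : Fin ℓ → F) (hg : ∀ j, g j ≤ (j + 2) * m) (hc : ∀ j, c j ≠ 0)
    (htwist : ∀ j, X ^ g j + C (c j) * X ^ ((j + 2) * m + 1) ∈ P) :
    ∀ d ≤ (ℓ + 2) * m + 2, X ^ d ∈ Q := by
  intro d
  induction d using Nat.strong_induction_on with
  | _ d ih =>
    intro hd
    by_cases hlo : d ≤ 2 * m + 2
    · have hsplit : (X : F[X]) ^ d = X ^ min d (m + 1) * X ^ (d - min d (m + 1)) := by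
        rw [← pow_add, Nat.add_sub_cancel' (min_le_left _ _)]
      rw [hsplit]
      exact hmul _ (hX _ (min_le_right _ _)) _ (hX _ (by omega))
    · obtain ⟨j, a, ha, rfl⟩ := exists_eq_add_mul_add_one (not_le.1 hlo) hd
      have hprod : (X ^ g j + C (c j) * X ^ ((j + 2) * m + 1)) * X ^ a
          = X ^ (g j + a) + c j • X ^ ((j + 2) * m + 1 + a) := by
        rw [smul_eq_C_mul]; ring
      have hsum := hmul _ (htwist j) _ (hX a ha)
      rw [hprod] at hsum
      have hgj := hg j
      have hlow := ih (g j + a) (by omega) (by omega)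
      have hsmul := (Submodule.add_mem_iff_right Q hlow).1 hsum
      exact (Submodule.smul_mem_iff Q (hc _)).1 hsmul

lemma eq_top_of_evalVec_X_pow_mem {n : ℕ} {α : Fin n → F} (hα : Function.Injective α)
    {S : Submodule F (Fin n → F)} (hS : ∀ d < n, evalVec α (X ^ d) ∈ S) : S = ⊤ := by
  have hli : LinearIndependent F fun d : Fin n => evalVec α (X ^ (d : ℕ)) := by
    simp only [evalVec_X_pow]
    exact (Matrix.vandermonde α).linearIndependent_cols_iff_isUnit.2
      ((Matrix.isUnit_iff_isUnit_det _).2 (Matrix.det_vandermonde_ne_zero_iff.2 hα).isUnit)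
  rw [eq_top_iff, ← hli.span_eq_top_of_card_eq_finrank' (by simp), Submodule.span_le]
  rintro _ ⟨d, rfl⟩
  exact hS d d.isLt

end

theorem schurSquare_cryptoFamily_eq_n_general {F : Type*} [Field F]
    {n k ℓ : ℕ} (hℓ : 0 < ℓ)
    (K : Fin (ℓ + 1) → Subfield F)
    (α : Fin n → F) (hα : Function.Injective α)
    (r : ℕ) (hr : r = (n + 1 + (ℓ + 2) - 1) / (ℓ + 2) + 2)
    (t h : Fin ℓ → ℕ)
    (htdef : ∀ j : Fin ℓ, t j = ((j : ℕ) + 2) * (r - 2) + 2 - k)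
    (hhdef : ∀ j : Fin ℓ, h j = r + (j : ℕ))
    (ht1 : ∀ j, 1 ≤ t j) (hh : ∀ j, h j < k)
    (η : Fin ℓ → F)
    (hη : ∀ j : Fin ℓ, η j ∈ K j.succ ∧ η j ∉ K j.castSucc) :
    Module.finrank F
      (schurCode (twistedCode n k ℓ α t h η) (twistedCode n k ℓ α t h η)) = n := by
  obtain ⟨m, rfl⟩ : ∃ m, r = m + 2 := ⟨_, hr⟩
  simp only [Nat.add_sub_cancel] at htdef
  have hn : n + 1 ≤ (ℓ + 2) * m := by
    have := le_smul_ceilDiv (a := ℓ + 2) (b := n + 1) (by omega)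
    rwa [Nat.ceilDiv_eq_add_pred_div, smul_eq_mul, ← Nat.add_right_cancel hr] at this
  -- `1 ≤ t j` rules out truncated subtraction in `htdef`: `k ≤ (j + 2) * m + 1`.
  have htdeg (j : Fin ℓ) : k - 1 + t j = (j + 2) * m + 1 := by
    have := htdef j; have := ht1 j; have := hh j; omega
  have hg (j : Fin ℓ) : h j ≤ (j + 2) * m := by
    have := htdef j; have := ht1 j; have := hh j; omega
  have hinj : Function.Injective h := fun a b hab => Fin.ext (by rw [hhdef, hhdef] at hab; omega)
  have hX (a : ℕ) (ha : a ≤ m + 1) : X ^ a ∈ twistedSet k ℓ t h η := by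
    have := hh ⟨0, hℓ⟩
    exact X_pow_mem_twistedSet (by rw [hhdef] at this; omega) fun j => by rw [hhdef]; omega
  have htwist (j : Fin ℓ) : X ^ h j + C (η j) * X ^ ((j + 2) * m + 1) ∈ twistedSet k ℓ t h η :=
    htdeg j ▸ X_pow_add_C_mul_X_pow_mem_twistedSet hinj (hh j)
  have hη0 (j : Fin ℓ) : η j ≠ 0 := fun h0 => (hη j).2 (h0 ▸ zero_mem _)
  have hfull := X_pow_mem_of_mul_mem (Q := (schurCode _ _).comap (evalVec α))
    (fun p hp q hq => evalVec_mul_mem_schurCode_twistedCode α hp hq) hX h η hg hη0 htwist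
  rw [eq_top_of_evalVec_X_pow_mem (S := schurCode _ _) hα fun d hd => hfull d (by omega),
    finrank_top, Module.finrank_fin_fun]

/-- For a twisted RS code `C ∈ F^{n,k}_ℓ` of the crypto family, with
`r = ⌈(n+1)/(ℓ+2)⌉ + 2`, twists `tᵢ = (i+1)(r-2) - k + 2` and hooks
`hᵢ = r - 1 + i` (here `0`-indexed: `i = j + 1` for `j : Fin ℓ`), the Schur
square has full dimension: `dim(C²) = n`. -/
theorem schurSquare_cryptoFamily_eq_n {F : Type*} [Field F] [Fintype F]
    {n k ℓ : ℕ} (hk : 0 < k) (hkhalf : 2 * k + 4 ≤ n) (hℓ : 0 < ℓ)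
    (K : Fin (ℓ + 1) → Subfield F)
    (hchain : ∀ i : Fin ℓ, K i.castSucc < K i.succ)
    (htop : K (Fin.last ℓ) = ⊤)
    (α : Fin n → F) (hα : Function.Injective α)
    (hαK : ∀ i, α i ∈ K 0) (hα0 : ∀ i, α i ≠ 0)
    (r : ℕ) (hr : r = (n + 1 + (ℓ + 2) - 1) / (ℓ + 2) + 2)
    (t h : Fin ℓ → ℕ)
    (htdef : ∀ j : Fin ℓ, t j = ((j : ℕ) + 2) * (r - 2) + 2 - k)
    (hhdef : ∀ j : Fin ℓ, h j = r + (j : ℕ))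
    (ht1 : ∀ j, 1 ≤ t j) (ht2 : ∀ j, t j ≤ n - k) (hh : ∀ j, h j < k)
    (η : Fin ℓ → F)
    (hη : ∀ j : Fin ℓ, η j ∈ K j.succ ∧ η j ∉ K j.castSucc) :
    Module.finrank F
      (schurCode (twistedCode n k ℓ α t h η) (twistedCode n k ℓ α t h η)) = n :=
  schurSquare_cryptoFamily_eq_n_general hℓ K α hα r hr t h htdef hhdef ht1 hh η hη
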